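/- arXiv:2603.14904 — 2 statements merged into one kernel-verified Lean document; each statement's English description precedes it below -/
import Mathlib

section
/- Let α ∈ (0,1] and let f: [0,1] → ℝ be α-Hölder continuous. Fix ε₀ ∈ (0,1/2) and x ∈ [0,1], and let (pₙ, qₙ) ∈ ℕ × ℕ* satisfy pₙ/qₙ ∈ [0,1], |pₙ/qₙ − x| < qₙ^{-1/2} and qₙ → ∞. Then there is a constant C₁ depending only on ε₀, α, ‖f‖_∞ and the α-Hölder constant of f such that, for all sufficiently large n, |∫₀¹ ρ_{pₙ, qₙ−pₙ}(s) f(s) ds − f(x)| ≤ C₁ · qₙ^{(-1/2+ε₀)α}. -/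
/-!
The error is `∫ ρ(s) (f s - f x) ds`. For any `δ > 0` the Hölder bound gives
`|f s - f x| ≤ H (δ^α + δ^(α-2) (s - x)^2)`, so the error is controlled by the second moment of
the Beta density about `x`. Its variance is at most `1/(q+1)` and its mean `(p+1)/(q+2)` lies
within `1/q` of `p/q`, hence within `2δ` of `x` for `δ = q^(-1/2)`; the second moment is then at
most `5δ^2`, and the error at most `6 H δ^α = 6 H q^(-α/2)`, for every `n`.
-/

/-- The density of the Beta distribution `Be(k+1, l+1)` on `[0,1]`. -/
noncomputable def rho (k l : ℕ) (s : ℝ) : ℝ :=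
  ((k + l + 1).factorial : ℝ) / (k.factorial * l.factorial) * s ^ k * (1 - s) ^ l

open intervalIntegral

lemma integral_pow_mul_one_sub_pow_succ (k l : ℕ) :
    ((k : ℝ) + 1) * ∫ x in (0:ℝ)..1, x ^ k * (1 - x) ^ (l + 1)
      = ((l : ℝ) + 1) * ∫ x in (0:ℝ)..1, x ^ (k + 1) * (1 - x) ^ l := by
  have hderiv : ∀ x : ℝ, HasDerivAt (fun x : ℝ => x ^ (k + 1) * (1 - x) ^ (l + 1))
      (((k : ℝ) + 1) * (x ^ k * (1 - x) ^ (l + 1))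
        - ((l : ℝ) + 1) * (x ^ (k + 1) * (1 - x) ^ l)) x := by
    intro x
    have h := ((hasDerivAt_id x).pow (k + 1)).mul (((hasDerivAt_id x).const_sub 1).pow (l + 1))
    refine h.congr_deriv ?_
    simp only [id, Pi.pow_apply, Nat.cast_add, Nat.cast_one, add_tsub_cancel_right]
    ring
  have hint := integral_eq_sub_of_hasDerivAt (fun x _ => hderiv x)
    (Continuous.intervalIntegrable (by fun_prop) 0 1)
  rw [integral_sub (Continuous.intervalIntegrable (by fun_prop) _ _)
    (Continuous.intervalIntegrable (by fun_prop) _ _), integral_const_mul,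
    integral_const_mul] at hint
  rw [← sub_eq_zero, hint]
  simp

theorem integral_pow_mul_one_sub_pow (k l : ℕ) :
    ∫ x in (0:ℝ)..1, x ^ k * (1 - x) ^ l
      = (k.factorial * l.factorial : ℝ) / (k + l + 1).factorial := by
  induction l generalizing k with
  | zero =>
    simp only [pow_zero, mul_one, integral_pow, Nat.factorial_zero, Nat.cast_one,
      Nat.add_zero, Nat.factorial_succ k]
    push_cast
    field_simp
    simp
  | succ l ih =>
    have h := integral_pow_mul_one_sub_pow_succ k l
    rw [ih (k + 1), show k + 1 + l + 1 = k + (l + 1) + 1 by omega, Nat.factorial_succ k] at h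
    apply mul_left_cancel₀ (show (k : ℝ) + 1 ≠ 0 by positivity)
    rw [h, Nat.factorial_succ l]
    push_cast
    ring

lemma continuous_rho (k l : ℕ) : Continuous (rho k l) := by
  unfold rho
  fun_prop

lemma rho_nonneg (k l : ℕ) {s : ℝ} (hs : s ∈ Set.Icc (0:ℝ) 1) : 0 ≤ rho k l s := by
  have h1 : 0 ≤ 1 - s := sub_nonneg.mpr hs.2
  have h0 := hs.1
  unfold rho
  positivity

theorem integral_rho_mul_pow (k l m : ℕ) :
    ∫ s in (0:ℝ)..1, rho k l s * s ^ m
      = ((k + l + 1).factorial * (k + m).factorial : ℝ)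
          / (k.factorial * (k + m + l + 1).factorial) := by
  have h : ∀ s : ℝ, rho k l s * s ^ m = ((k + l + 1).factorial : ℝ)
      / (k.factorial * l.factorial) * (s ^ (k + m) * (1 - s) ^ l) := by
    intro s
    unfold rho
    ring
  simp only [h]
  rw [integral_const_mul, integral_pow_mul_one_sub_pow]
  field_simp

theorem integral_rho (k l : ℕ) : ∫ s in (0:ℝ)..1, rho k l s = 1 := by
  have h := integral_rho_mul_pow k l 0
  simp only [pow_zero, mul_one, Nat.add_zero] at h
  rw [h]
  field_simp

theorem integral_rho_mul_self (k l : ℕ) :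
    ∫ s in (0:ℝ)..1, rho k l s * s = ((k:ℝ) + 1) / (k + l + 2) := by
  have h := integral_rho_mul_pow k l 1
  simp only [pow_one] at h
  rw [show k + 1 + l + 1 = k + l + 1 + 1 by omega, Nat.factorial_succ (k + l + 1),
    Nat.factorial_succ k] at h
  rw [h]
  push_cast
  field_simp
  ring

theorem integral_rho_mul_sq (k l : ℕ) :
    ∫ s in (0:ℝ)..1, rho k l s * s ^ 2
      = ((k:ℝ) + 1) * (k + 2) / ((k + l + 2) * (k + l + 3)) := by
  rw [integral_rho_mul_pow k l 2, show k + 2 + l + 1 = k + l + 1 + 1 + 1 by omega,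
    show k + 2 = k + 1 + 1 by omega, Nat.factorial_succ (k + l + 1 + 1),
    Nat.factorial_succ (k + l + 1), Nat.factorial_succ (k + 1), Nat.factorial_succ k]
  push_cast
  field_simp
  ring

theorem integral_rho_mul_sub_sq_le (k l : ℕ) (x : ℝ) :
    ∫ s in (0:ℝ)..1, rho k l s * (s - x) ^ 2
      ≤ 1 / ((k:ℝ) + l + 1) + (x - ((k:ℝ) + 1) / (k + l + 2)) ^ 2 := by
  have h : ∀ s : ℝ, rho k l s * (s - x) ^ 2
      = rho k l s * s ^ 2 - 2 * x * (rho k l s * s) + x ^ 2 * rho k l s := by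
    intro s
    ring
  have hρ := continuous_rho k l
  simp only [h]
  rw [integral_add (Continuous.intervalIntegrable (by fun_prop) 0 1)
      (Continuous.intervalIntegrable (by fun_prop) 0 1),
    integral_sub (Continuous.intervalIntegrable (by fun_prop) 0 1)
      (Continuous.intervalIntegrable (by fun_prop) 0 1),
    integral_const_mul, integral_const_mul, integral_rho, integral_rho_mul_self,
    integral_rho_mul_sq]
  set K := (k:ℝ)
  set L := (l:ℝ)
  have hK : 0 ≤ K := Nat.cast_nonneg k
  have hL : 0 ≤ L := Nat.cast_nonneg l
  have hvariance : (K + 1) * (K + 2) / ((K + L + 2) * (K + L + 3)) - ((K + 1) / (K + L + 2)) ^ 2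
      = (K + 1) * (L + 1) / ((K + L + 2) ^ 2 * (K + L + 3)) := by
    field_simp
    ring
  have hvariance_le : (K + 1) * (L + 1) / ((K + L + 2) ^ 2 * (K + L + 3)) ≤ 1 / (K + L + 1) := by
    rw [div_le_div_iff₀ (by positivity) (by positivity)]
    have h1 : (K + 1) * (L + 1) ≤ (K + L + 2) ^ 2 := by nlinarith
    nlinarith [mul_le_mul h1 (by linarith : K + L + 1 ≤ K + L + 3) (by positivity) (by positivity)]
  nlinarith [hvariance, hvariance_le]

lemma abs_succ_div_add_two_sub_div_le {k n : ℝ} (hk : 0 ≤ k) (hkn : k ≤ n) (hn : 0 < n) :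
    |(k + 1) / (n + 2) - k / n| ≤ 1 / n := by
  have heq : (k + 1) / (n + 2) - k / n = (n - 2 * k) / n / (n + 2) := by
    field_simp
    ring
  rw [heq, abs_div, abs_div, abs_of_pos hn, abs_of_pos (by linarith : 0 < n + 2),
    div_div, div_le_div_iff₀ (by positivity) hn]
  nlinarith [abs_le.mpr (⟨by linarith, by linarith⟩ : -n ≤ n - 2 * k ∧ n - 2 * k ≤ n)]

theorem integral_rho_mul_sub_sq_le_of_sq_le {k l : ℕ} (hkl : 0 < k + l) {x : ℝ}
    (hx : ((k:ℝ) / (k + l) - x) ^ 2 ≤ 1 / (k + l)) :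
    ∫ s in (0:ℝ)..1, rho k l s * (s - x) ^ 2 ≤ 5 / ((k:ℝ) + l) := by
  set n := (k:ℝ) + l with hn_def
  have hn : 1 ≤ n := by rw [hn_def]; exact_mod_cast hkl
  have hk : (k:ℝ) ≤ n := by rw [hn_def]; linarith [(Nat.cast_nonneg l : (0:ℝ) ≤ l)]
  have hmean := abs_succ_div_add_two_sub_div_le (Nat.cast_nonneg k) hk (by linarith)
  set a := |x - (k:ℝ) / n|
  set b := 1 / n
  have hb : 0 < b := by positivity
  have hb1 : b ≤ 1 := by rw [div_le_one (by linarith)]; exact hn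
  have ha_sq : a ^ 2 ≤ b := by
    rw [show a ^ 2 = ((k:ℝ) / n - x) ^ 2 by simp only [a, sq_abs]; ring]
    exact hx
  have hab : a * b ≤ b := by nlinarith [abs_nonneg (x - (k:ℝ) / n)]
  have hshift : (x - ((k:ℝ) + 1) / (n + 2)) ^ 2 ≤ (a + b) ^ 2 := by
    rw [← sq_abs]
    gcongr
    calc |x - ((k:ℝ) + 1) / (n + 2)|
        ≤ a + |(k:ℝ) / n - ((k:ℝ) + 1) / (n + 2)| := abs_sub_le _ _ _
      _ ≤ a + b := by linarith [abs_sub_comm ((k:ℝ) / n) (((k:ℝ) + 1) / (n + 2))]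
  have hvar : 1 / (n + 1) ≤ b := one_div_le_one_div_of_le (by linarith) (by linarith)
  calc ∫ s in (0:ℝ)..1, rho k l s * (s - x) ^ 2
      ≤ 1 / (n + 1) + (x - ((k:ℝ) + 1) / (n + 2)) ^ 2 := integral_rho_mul_sub_sq_le k l x
    _ ≤ b + (a + b) ^ 2 := add_le_add hvar hshift
    _ ≤ 5 * b := by nlinarith
    _ = 5 / n := by ring

lemma rpow_le_rpow_add_rpow_mul_sq {α δ u : ℝ} (hα0 : 0 ≤ α) (hα2 : α ≤ 2) (hδ : 0 < δ)
    (hu : 0 ≤ u) : u ^ α ≤ δ ^ α + δ ^ (α - 2) * u ^ 2 := by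
  rcases le_or_gt u δ with hle | hlt
  · have h := Real.rpow_le_rpow hu hle hα0
    have : 0 ≤ δ ^ (α - 2) * u ^ 2 := by positivity
    linarith
  · have hu0 : 0 < u := hδ.trans hlt
    have hsplit : u ^ α = u ^ (α - 2) * u ^ 2 := by
      rw [← Real.rpow_two, ← Real.rpow_add hu0, sub_add_cancel]
    have hdecr : u ^ (α - 2) ≤ δ ^ (α - 2) := Real.rpow_le_rpow_of_nonpos hδ hlt.le (by linarith)
    have : 0 ≤ δ ^ α := by positivity
    rw [hsplit]
    nlinarith [sq_nonneg u]

lemma continuousOn_of_abs_sub_le_mul_rpow {f : ℝ → ℝ} {S : Set ℝ} {C α : ℝ} (hα : 0 < α)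
    (hf : ∀ s ∈ S, ∀ t ∈ S, |f s - f t| ≤ C * |s - t| ^ α) : ContinuousOn f S := by
  intro t ht
  have hbound : Filter.Tendsto (fun s : ℝ => C * |s - t| ^ α) (nhdsWithin t S) (nhds 0) := by
    have hcont : ContinuousAt (fun s : ℝ => C * |s - t| ^ α) t := by fun_prop (disch := positivity)
    simpa [ContinuousWithinAt, Real.zero_rpow hα.ne'] using hcont.continuousWithinAt (s := S)
  rw [ContinuousWithinAt, tendsto_iff_dist_tendsto_zero]
  refine squeeze_zero' (Filter.Eventually.of_forall fun _ => dist_nonneg) ?_ hbound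
  filter_upwards [self_mem_nhdsWithin] with s hs
  exact hf s hs t ht

theorem abs_integral_mul_sub_le_of_holder {ρ f : ℝ → ℝ} {α C c δ x : ℝ} (hα0 : 0 < α)
    (hα2 : α ≤ 2) (hC : 0 ≤ C)
    (hf : ∀ s ∈ Set.Icc (0:ℝ) 1, ∀ t ∈ Set.Icc (0:ℝ) 1, |f s - f t| ≤ C * |s - t| ^ α)
    (hx : x ∈ Set.Icc (0:ℝ) 1) (hρ : Continuous ρ) (hρ_nonneg : ∀ s ∈ Set.Icc (0:ℝ) 1, 0 ≤ ρ s)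
    (hρ_one : ∫ s in (0:ℝ)..1, ρ s = 1) (hδ : 0 < δ)
    (hmoment : ∫ s in (0:ℝ)..1, ρ s * (s - x) ^ 2 ≤ c * δ ^ 2) :
    |(∫ s in (0:ℝ)..1, ρ s * f s) - f x| ≤ C * (1 + c) * δ ^ α := by
  have hfc : ContinuousOn f (Set.uIcc 0 1) := by
    rw [Set.uIcc_of_le zero_le_one]
    exact continuousOn_of_abs_sub_le_mul_rpow hα0 hf
  have hdiff : (∫ s in (0:ℝ)..1, ρ s * f s) - f x = ∫ s in (0:ℝ)..1, ρ s * (f s - f x) := by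
    have hI : IntervalIntegrable (fun s => ρ s * f s) MeasureTheory.volume 0 1 :=
      (hρ.continuousOn.mul hfc).intervalIntegrable
    simp only [mul_sub]
    rw [integral_sub hI ((hρ.intervalIntegrable 0 1).mul_const (f x)), integral_mul_const,
      hρ_one, one_mul]
  have hpointwise : ∀ s ∈ Set.Ioc (0:ℝ) 1, ‖ρ s * (f s - f x)‖
      ≤ C * (δ ^ α * ρ s + δ ^ (α - 2) * (ρ s * (s - x) ^ 2)) := by
    intro s hs
    have hs' : s ∈ Set.Icc (0:ℝ) 1 := Set.Ioc_subset_Icc_self hs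
    have hρs := hρ_nonneg s hs'
    have hsplit := rpow_le_rpow_add_rpow_mul_sq hα0.le hα2 hδ (abs_nonneg (s - x))
    rw [sq_abs] at hsplit
    calc ‖ρ s * (f s - f x)‖ = ρ s * |f s - f x| := by
          rw [Real.norm_eq_abs, abs_mul, abs_of_nonneg hρs]
      _ ≤ ρ s * (C * (δ ^ α + δ ^ (α - 2) * (s - x) ^ 2)) := by
          gcongr
          exact (hf s hs' x hx).trans (by gcongr)
      _ = C * (δ ^ α * ρ s + δ ^ (α - 2) * (ρ s * (s - x) ^ 2)) := by ring
  have hbound := norm_integral_le_of_norm_le (μ := MeasureTheory.volume) zero_le_one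
    (Filter.Eventually.of_forall hpointwise) (Continuous.intervalIntegrable (by fun_prop) 0 1)
  rw [integral_const_mul, integral_add (Continuous.intervalIntegrable (by fun_prop) 0 1)
    (Continuous.intervalIntegrable (by fun_prop) 0 1), integral_const_mul, integral_const_mul,
    hρ_one, ← hdiff, Real.norm_eq_abs] at hbound
  have hδα : δ ^ (α - 2) * δ ^ 2 = δ ^ α := by
    rw [← Real.rpow_two, ← Real.rpow_add hδ, sub_add_cancel]
  calc |(∫ s in (0:ℝ)..1, ρ s * f s) - f x|
      ≤ C * (δ ^ α * 1 + δ ^ (α - 2) * ∫ s in (0:ℝ)..1, ρ s * (s - x) ^ 2) := hbound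
    _ ≤ C * (δ ^ α * 1 + δ ^ (α - 2) * (c * δ ^ 2)) := by gcongr
    _ = C * (1 + c) * δ ^ α := by rw [← hδα]; ring

theorem stmt_14_general (α : ℝ) (hα : α ∈ Set.Ioc (0:ℝ) 1)
    (f : ℝ → ℝ) (Hf : ℝ) (hHf : 0 ≤ Hf)
    (hf : ∀ s ∈ Set.Icc (0:ℝ) 1, ∀ t ∈ Set.Icc (0:ℝ) 1, |f s - f t| ≤ Hf * |s - t| ^ α)
    (ε₀ : ℝ) (hε₀ : ε₀ ∈ Set.Ioo (0:ℝ) (1/2))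
    (x : ℝ) (hx : x ∈ Set.Icc (0:ℝ) 1)
    (p q : ℕ → ℕ) (hq : ∀ n, 0 < q n)
    (hpq : ∀ n, (p n : ℝ) / (q n : ℝ) ∈ Set.Icc (0:ℝ) 1)
    (happrox : ∀ n, |(p n : ℝ) / (q n : ℝ) - x| < (q n : ℝ) ^ (-(1/2) : ℝ)) :
    ∃ C₁ > (0:ℝ), ∃ N : ℕ, ∀ n ≥ N,
      |(∫ s in (0:ℝ)..1, rho (p n) (q n - p n) s * f s) - f x|
        ≤ C₁ * (q n : ℝ) ^ ((-(1/2) + ε₀) * α) := by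
  refine ⟨6 * Hf + 1, by positivity, 0, fun n _ => ?_⟩
  have hq0 : (0:ℝ) < q n := by exact_mod_cast hq n
  have hpq_le : p n ≤ q n := by exact_mod_cast (div_le_one hq0).mp (hpq n).2
  have hsum : (p n : ℝ) + ((q n - p n : ℕ) : ℝ) = q n := by
    rw [Nat.cast_sub hpq_le]
    ring
  set δ := (q n : ℝ) ^ (-(1/2) : ℝ)
  have hδ : 0 < δ := by positivity
  have hδ_sq : δ ^ 2 = 1 / q n := by
    rw [← Real.rpow_two, ← Real.rpow_mul hq0.le]
    norm_num [Real.rpow_neg_one]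
  have hmoment : ∫ s in (0:ℝ)..1, rho (p n) (q n - p n) s * (s - x) ^ 2 ≤ 5 * δ ^ 2 := by
    have happrox_sq : ((p n : ℝ) / q n - x) ^ 2 ≤ δ ^ 2 :=
      sq_le_sq' (by linarith [(abs_lt.mp (happrox n)).1]) (abs_lt.mp (happrox n)).2.le
    rw [← hsum] at happrox_sq hδ_sq
    rw [hδ_sq, mul_one_div]
    exact integral_rho_mul_sub_sq_le_of_sq_le (by have := hq n; omega) (happrox_sq.trans_eq hδ_sq)
  have hδ_pow : δ ^ α ≤ (q n : ℝ) ^ ((-(1/2) + ε₀) * α) := by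
    rw [← Real.rpow_mul hq0.le]
    exact Real.rpow_le_rpow_of_exponent_le (by exact_mod_cast hq n)
      (by nlinarith [hε₀.1, hα.1])
  calc |(∫ s in (0:ℝ)..1, rho (p n) (q n - p n) s * f s) - f x|
      ≤ Hf * (1 + 5) * δ ^ α :=
        abs_integral_mul_sub_le_of_holder hα.1 (by linarith [hα.2]) hHf hf hx (continuous_rho _ _)
          (fun _ => rho_nonneg _ _) (integral_rho _ _) hδ hmoment
    _ ≤ (6 * Hf + 1) * (q n : ℝ) ^ ((-(1/2) + ε₀) * α) := by
        gcongr
        linarith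

theorem stmt_14 (α : ℝ) (hα : α ∈ Set.Ioc (0:ℝ) 1)
    (f : ℝ → ℝ) (Hf : ℝ) (hHf : 0 ≤ Hf)
    (hf : ∀ s ∈ Set.Icc (0:ℝ) 1, ∀ t ∈ Set.Icc (0:ℝ) 1, |f s - f t| ≤ Hf * |s - t| ^ α)
    (ε₀ : ℝ) (hε₀ : ε₀ ∈ Set.Ioo (0:ℝ) (1/2))
    (x : ℝ) (hx : x ∈ Set.Icc (0:ℝ) 1)
    (p q : ℕ → ℕ) (hq : ∀ n, 0 < q n)
    (hpq : ∀ n, (p n : ℝ) / (q n : ℝ) ∈ Set.Icc (0:ℝ) 1)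
    (happrox : ∀ n, |(p n : ℝ) / (q n : ℝ) - x| < (q n : ℝ) ^ (-(1/2) : ℝ))
    (hqt : Filter.Tendsto q Filter.atTop Filter.atTop) :
    ∃ C₁ > (0:ℝ), ∃ N : ℕ, ∀ n ≥ N,
      |(∫ s in (0:ℝ)..1, rho (p n) (q n - p n) s * f s) - f x|
        ≤ C₁ * (q n : ℝ) ^ ((-(1/2) + ε₀) * α) :=
  stmt_14_general α hα f Hf hHf hf ε₀ hε₀ x hx p q hq hpq happrox
end

section
/- Let α ∈ (0,1], let γ(x) = (Cx, y(x)) on [0,1] with C > 0 and y' α-Hölder. Fix ε₀ ∈ (0,1/2) and x ∈ [0,1], and let (pₙ, qₙ) satisfy pₙ/qₙ ∈ [0,1], |pₙ/qₙ − x| < qₙ^{-1/2}, qₙ → ∞. Then for all large n, | y'(x) − (qₙ+1)!·S_{pₙ, qₙ−pₙ}/C^{qₙ} | ≤ C₁ · qₙ^{(-1/2+ε₀)α}, where C₁ depends only on ε₀, α, ‖γ'‖_∞, and the α-Hölder constant of γ'. -/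
/-!
Up to the normalisation, `S_{p,q-p}` is the integral of `y'` against the Beta(`p+1`, `q-p+1`)
density: `(q+1)! S_{p,q-p} / C^q = ∫₀¹ β_{p,q-p}(s) y'(s) ds`. This density is concentrated within
`O(q^{-1/2})` of `p/q` (its second moment about `p/q` is at most `5/(4q)`), hence within
`O(q^{-1/2})` of `x`. At the scale `δ = q^{-1/2}`, the pointwise bound
`|x - s|^α ≤ 2δ^α + δ^{α-2}(s - p/q)²` (from `|u|^α ≤ δ^α + δ^{α-2}u²` and `|x - p/q| ≤ δ`),
integrated against the density, bounds the error by `(13/4) H q^{-α/2}` for every `n`.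
-/

open intervalIntegral Set
open MeasureTheory (volume)
open scoped Nat

theorem integral_pow_mul_one_sub_pow_s15 (a b : ℕ) :
    ∫ s in (0:ℝ)..1, s ^ a * (1 - s) ^ b = (a ! * b ! : ℝ) / (a + b + 1)! := by
  have h := Complex.betaIntegral_eq_Gamma_mul_div (a + 1) (b + 1)
    (by simp; positivity) (by simp; positivity)
  rw [show (a + 1 + (b + 1) : ℂ) = ((a + b + 1 : ℕ) : ℂ) + 1 by push_cast; ring,
    Complex.Gamma_nat_eq_factorial, Complex.Gamma_nat_eq_factorial,
    Complex.Gamma_nat_eq_factorial, Complex.betaIntegral] at h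
  simp only [add_sub_cancel_right, Complex.cpow_natCast] at h
  apply Complex.ofReal_injective
  rw [← intervalIntegral.integral_ofReal]
  push_cast at h ⊢
  exact h

/-- The Beta(`a + 1`, `b + 1`) density on `[0, 1]`. -/
noncomputable def betaDensity (a b : ℕ) (s : ℝ) : ℝ :=
  (a + b + 1)! / (a ! * b ! : ℝ) * (s ^ a * (1 - s) ^ b)

namespace betaDensity

@[fun_prop]
theorem continuous (a b : ℕ) : Continuous (betaDensity a b) := by
  unfold betaDensity; fun_prop

theorem nonneg (a b : ℕ) {s : ℝ} (hs : s ∈ Icc (0:ℝ) 1) : 0 ≤ betaDensity a b s := by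
  have h₀ : 0 ≤ s := hs.1
  have h₁ : 0 ≤ 1 - s := sub_nonneg.2 hs.2
  unfold betaDensity
  positivity

theorem integral_mul_pow (a b k : ℕ) :
    ∫ s in (0:ℝ)..1, betaDensity a b s * s ^ k
      = ((a + b + 1)! * (a + k)! : ℝ) / (a ! * (a + b + k + 1)!) := by
  have hb : (b ! : ℝ) ≠ 0 := by positivity
  calc ∫ s in (0:ℝ)..1, betaDensity a b s * s ^ k
      = ∫ s in (0:ℝ)..1, (a + b + 1)! / (a ! * b ! : ℝ) * (s ^ (a + k) * (1 - s) ^ b) := by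
        refine integral_congr fun s _ => ?_
        rw [betaDensity, pow_add]; ring
    _ = _ := by
        rw [integral_const_mul, integral_pow_mul_one_sub_pow_s15,
          show a + k + b + 1 = a + b + k + 1 by ring]
        field_simp

theorem integral_mul_eq_factorial_mul_integral (a b : ℕ) (g : ℝ → ℝ) :
    ∫ s in (0:ℝ)..1, betaDensity a b s * g s
      = (a + b + 1)! * ∫ s in (0:ℝ)..1, s ^ a * (1 - s) ^ b / (a ! * b ! : ℝ) * g s := by
  rw [← integral_const_mul]
  exact integral_congr fun s _ => by rw [betaDensity]; ring

theorem integral_eq_one (a b : ℕ) : ∫ s in (0:ℝ)..1, betaDensity a b s = 1 := by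
  simpa [field] using integral_mul_pow a b 0

theorem integral_mul_id (a b : ℕ) :
    ∫ s in (0:ℝ)..1, betaDensity a b s * s = (a + 1) / (a + b + 2) := by
  have h := integral_mul_pow a b 1
  simp only [pow_one] at h
  rw [h]
  push_cast [Nat.factorial_succ]
  field_simp
  ring

theorem integral_mul_sq (a b : ℕ) :
    ∫ s in (0:ℝ)..1, betaDensity a b s * s ^ 2
      = (a + 1) * (a + 2) / ((a + b + 2) * (a + b + 3)) := by
  rw [integral_mul_pow]
  push_cast [Nat.factorial_succ]
  field_simp
  ring

theorem integral_mul_sub_sq_le (a b : ℕ) (hab : 0 < a + b) :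
    ∫ s in (0:ℝ)..1, betaDensity a b s * (s - a / (a + b)) ^ 2 ≤ 5 / (4 * (a + b)) := by
  set m : ℝ := a / (a + b)
  have expand : ∫ s in (0:ℝ)..1, betaDensity a b s * (s - m) ^ 2
      = (∫ s in (0:ℝ)..1, betaDensity a b s * s ^ 2)
        - 2 * m * (∫ s in (0:ℝ)..1, betaDensity a b s * s)
        + m ^ 2 * ∫ s in (0:ℝ)..1, betaDensity a b s := by
    rw [← integral_const_mul, ← integral_const_mul, ← integral_sub, ← integral_add]
    · exact integral_congr fun s _ => by ring
    all_goals exact Continuous.intervalIntegrable (by fun_prop) _ _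
  rw [expand, integral_mul_sq, integral_mul_id, integral_eq_one]
  have hB : (1 : ℝ) ≤ a + b := by exact_mod_cast hab
  have hAB : (a : ℝ) ≤ a + b := le_add_of_nonneg_right b.cast_nonneg
  have hA : (0 : ℝ) ≤ a := a.cast_nonneg
  simp only [m]
  generalize (a : ℝ) = A at *
  generalize A + b = B at *
  have hB0 : 0 < B := by linarith
  field_simp
  -- after clearing denominators: `4AB(B - A) ≤ B³` and `A(A - B) ≤ 0`
  nlinarith [mul_nonneg hB0.le (sq_nonneg (B - 2 * A)), mul_nonneg hA (sub_nonneg.2 hAB),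
    pow_pos hB0 3]

end betaDensity

theorem abs_rpow_le_rpow_add_rpow_mul_sq {α δ : ℝ} (u : ℝ) (hδ : 0 < δ) (hα₀ : 0 ≤ α)
    (hα₂ : α ≤ 2) : |u| ^ α ≤ δ ^ α + δ ^ (α - 2) * u ^ 2 := by
  rcases le_or_gt |u| δ with hu | hu
  · have : 0 ≤ δ ^ (α - 2) * u ^ 2 := by positivity
    linarith [Real.rpow_le_rpow (abs_nonneg u) hu hα₀]
  · calc |u| ^ α = |u| ^ (α - 2) * u ^ 2 := by
          rw [← sq_abs u, ← Real.rpow_natCast, ← Real.rpow_add (hδ.trans hu)]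
          norm_num
      _ ≤ δ ^ (α - 2) * u ^ 2 :=
          mul_le_mul_of_nonneg_right (Real.rpow_le_rpow_of_nonpos hδ hu.le (by linarith))
            (sq_nonneg u)
      _ ≤ δ ^ α + δ ^ (α - 2) * u ^ 2 := le_add_of_nonneg_left (by positivity)

theorem abs_sub_rpow_le {α δ x m : ℝ} (s : ℝ) (hα : α ∈ Ioc (0:ℝ) 1) (hδ : 0 < δ)
    (hxm : |x - m| ≤ δ) : |x - s| ^ α ≤ 2 * δ ^ α + δ ^ (α - 2) * (s - m) ^ 2 :=
  calc |x - s| ^ α ≤ (|x - m| + |m - s|) ^ α :=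
        Real.rpow_le_rpow (abs_nonneg _) (abs_sub_le x m s) hα.1.le
    _ ≤ |x - m| ^ α + |m - s| ^ α :=
        Real.rpow_add_le_add_rpow (abs_nonneg _) (abs_nonneg _) hα.1.le hα.2
    _ ≤ δ ^ α + (δ ^ α + δ ^ (α - 2) * (m - s) ^ 2) :=
        add_le_add (Real.rpow_le_rpow (abs_nonneg _) hxm hα.1.le)
          (abs_rpow_le_rpow_add_rpow_mul_sq _ hδ hα.1.le (by linarith [hα.2]))
    _ = 2 * δ ^ α + δ ^ (α - 2) * (s - m) ^ 2 := by ring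

theorem abs_sub_integral_mul_le_of_holder {f g : ℝ → ℝ} {H α δ x m : ℝ} (hf : Continuous f)
    (hf₀ : ∀ s ∈ Icc (0:ℝ) 1, 0 ≤ f s) (hf₁ : ∫ s in (0:ℝ)..1, f s = 1)
    (hg : ContinuousOn g (Icc 0 1)) (hH : 0 ≤ H)
    (hgH : ∀ s ∈ Icc (0:ℝ) 1, ∀ t ∈ Icc (0:ℝ) 1, |g s - g t| ≤ H * |s - t| ^ α)
    (hα : α ∈ Ioc (0:ℝ) 1) (hδ : 0 < δ) (hx : x ∈ Icc (0:ℝ) 1) (hxm : |x - m| ≤ δ) :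
    |g x - ∫ s in (0:ℝ)..1, f s * g s|
      ≤ H * (2 * δ ^ α + δ ^ (α - 2) * ∫ s in (0:ℝ)..1, f s * (s - m) ^ 2) := by
  have int_fg : IntervalIntegrable (fun s => f s * g s) volume 0 1 :=
    (hf.continuousOn.mul hg).intervalIntegrable_of_Icc zero_le_one
  have int_fgx : IntervalIntegrable (fun s => f s * (g x - g s)) volume 0 1 :=
    (hf.continuousOn.mul (continuousOn_const.sub hg)).intervalIntegrable_of_Icc zero_le_one
  have int_f := hf.intervalIntegrable (μ := volume) 0 1
  have int_fv : IntervalIntegrable (fun s => f s * (s - m) ^ 2) volume 0 1 :=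
    (by fun_prop : Continuous _).intervalIntegrable 0 1
  have as_integral : g x - ∫ s in (0:ℝ)..1, f s * g s = ∫ s in (0:ℝ)..1, f s * (g x - g s) := by
    simp_rw [mul_sub]
    rw [integral_sub (int_f.mul_const _) int_fg, integral_mul_const, hf₁, one_mul]
  have pointwise : ∀ s ∈ Icc (0:ℝ) 1, |f s * (g x - g s)|
      ≤ H * (2 * δ ^ α) * f s + H * δ ^ (α - 2) * (f s * (s - m) ^ 2) := by
    intro s hs
    rw [abs_mul, abs_of_nonneg (hf₀ s hs)]
    calc f s * |g x - g s| ≤ f s * (H * (2 * δ ^ α + δ ^ (α - 2) * (s - m) ^ 2)) :=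
          mul_le_mul_of_nonneg_left ((hgH x hx s hs).trans
            (mul_le_mul_of_nonneg_left (abs_sub_rpow_le s hα hδ hxm) hH)) (hf₀ s hs)
      _ = _ := by ring
  calc |g x - ∫ s in (0:ℝ)..1, f s * g s|
      ≤ ∫ s in (0:ℝ)..1, |f s * (g x - g s)| := by
        rw [as_integral]; exact abs_integral_le_integral_abs zero_le_one
    _ ≤ ∫ s in (0:ℝ)..1, (H * (2 * δ ^ α) * f s + H * δ ^ (α - 2) * (f s * (s - m) ^ 2)) :=
        integral_mono_on zero_le_one int_fgx.abs
          ((int_f.const_mul _).add (int_fv.const_mul _)) pointwise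
    _ = _ := by
        rw [integral_add (int_f.const_mul _) (int_fv.const_mul _), integral_const_mul,
          integral_const_mul, hf₁]
        ring

theorem abs_sub_integral_betaDensity_mul_le {g : ℝ → ℝ} {H α x : ℝ} (a b : ℕ) (hab : 0 < a + b)
    (hg : ContinuousOn g (Icc 0 1)) (hH : 0 ≤ H)
    (hgH : ∀ s ∈ Icc (0:ℝ) 1, ∀ t ∈ Icc (0:ℝ) 1, |g s - g t| ≤ H * |s - t| ^ α)
    (hα : α ∈ Ioc (0:ℝ) 1) (hx : x ∈ Icc (0:ℝ) 1)
    (hxm : |x - a / ((a + b : ℕ) : ℝ)| ≤ ((a + b : ℕ) : ℝ) ^ (-(1/2) : ℝ)) :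
    |g x - ∫ s in (0:ℝ)..1, betaDensity a b s * g s|
      ≤ 13 / 4 * H * ((a + b : ℕ) : ℝ) ^ (-(1/2) * α) := by
  have hvar := betaDensity.integral_mul_sub_sq_le a b hab
  have hn : (0:ℝ) < a + b := by exact_mod_cast hab
  push_cast at hxm hvar ⊢
  set n : ℝ := a + b
  set δ : ℝ := n ^ (-(1/2) : ℝ)
  have hδα : δ ^ α = n ^ (-(1/2) * α) := by rw [← Real.rpow_mul hn.le]
  have hδα2 : δ ^ (α - 2) * (5 / (4 * n)) = 5 / 4 * n ^ (-(1/2) * α) := by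
    rw [← Real.rpow_mul hn.le, show -(1/2) * (α - 2) = 1 + -(1/2) * α by ring,
      Real.rpow_add hn, Real.rpow_one]
    field_simp
  calc |g x - ∫ s in (0:ℝ)..1, betaDensity a b s * g s|
      ≤ H * (2 * δ ^ α + δ ^ (α - 2) * ∫ s in (0:ℝ)..1, betaDensity a b s * (s - a / n) ^ 2) :=
        abs_sub_integral_mul_le_of_holder (betaDensity.continuous a b)
          (fun _ => betaDensity.nonneg a b) (betaDensity.integral_eq_one a b) hg hH hgH hα
          (by positivity) hx hxm
    _ ≤ H * (2 * δ ^ α + δ ^ (α - 2) * (5 / (4 * n))) := by gcongr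
    _ = 13 / 4 * H * n ^ (-(1/2) * α) := by rw [hδα2, hδα]; ring

theorem stmt_15_general (α : ℝ) (hα : α ∈ Set.Ioc (0:ℝ) 1)
    (C : ℝ) (hC : 0 < C) (y' : ℝ → ℝ)
    (hy' : ContinuousOn y' (Set.Icc (0:ℝ) 1))
    (Hy : ℝ) (hHy : 0 ≤ Hy)
    (hyHolder : ∀ s ∈ Set.Icc (0:ℝ) 1, ∀ t ∈ Set.Icc (0:ℝ) 1,
      |y' s - y' t| ≤ Hy * |s - t| ^ α)
    (S : ℕ → ℕ → ℝ)
    (hS : ∀ k l, S k l = C ^ (k + l) *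
      ∫ s in (0:ℝ)..1, s ^ k * (1 - s) ^ l / (k.factorial * l.factorial) * y' s)
    (ε₀ : ℝ) (hε₀ : ε₀ ∈ Set.Ioo (0:ℝ) (1/2))
    (x : ℝ) (hx : x ∈ Set.Icc (0:ℝ) 1)
    (p q : ℕ → ℕ) (hq : ∀ n, 0 < q n)
    (hpq : ∀ n, (p n : ℝ) / (q n : ℝ) ∈ Set.Icc (0:ℝ) 1)
    (happrox : ∀ n, |(p n : ℝ) / (q n : ℝ) - x| < (q n : ℝ) ^ (-(1/2) : ℝ)) :
    ∃ C₁ > (0:ℝ), ∃ N : ℕ, ∀ n ≥ N,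
      |y' x - ((q n + 1).factorial : ℝ) * S (p n) (q n - p n) / C ^ (q n)|
        ≤ C₁ * (q n : ℝ) ^ ((-(1/2) + ε₀) * α) := by
  refine ⟨4 * Hy + 1, by positivity, 0, fun n _ => ?_⟩
  set P := p n
  set Q := q n
  have hQ : (1:ℝ) ≤ Q := by exact_mod_cast hq n
  have hPQ : P ≤ Q := by exact_mod_cast (div_le_one (by positivity)).1 (hpq n).2
  have hPQ' : P + (Q - P) = Q := Nat.add_sub_cancel' hPQ
  have hS_eq : ((Q + 1)! : ℝ) * S P (Q - P) / C ^ Q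
      = ∫ s in (0:ℝ)..1, betaDensity P (Q - P) s * y' s := by
    rw [hS, betaDensity.integral_mul_eq_factorial_mul_integral, hPQ', mul_left_comm,
      mul_div_cancel_left₀ _ (pow_ne_zero _ hC.ne')]
  have hbound := abs_sub_integral_betaDensity_mul_le P (Q - P) (by rw [hPQ']; exact hq n)
    hy' hHy hyHolder hα hx (by rw [hPQ', abs_sub_comm]; exact (happrox n).le)
  rw [← hS_eq, hPQ'] at hbound
  calc |y' x - ((Q + 1)! : ℝ) * S P (Q - P) / C ^ Q|
      ≤ 13 / 4 * Hy * (Q:ℝ) ^ (-(1/2) * α) := hbound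
    _ ≤ (4 * Hy + 1) * (Q:ℝ) ^ ((-(1/2) + ε₀) * α) := by
        gcongr
        all_goals linarith [hε₀.1, hα.1]

theorem stmt_15 (α : ℝ) (hα : α ∈ Set.Ioc (0:ℝ) 1)
    (C : ℝ) (hC : 0 < C) (y y' : ℝ → ℝ)
    (hy : ∀ s ∈ Set.Icc (0:ℝ) 1, HasDerivAt y (y' s) s)
    (hy' : ContinuousOn y' (Set.Icc (0:ℝ) 1))
    (Hy : ℝ) (hHy : 0 ≤ Hy)
    (hyHolder : ∀ s ∈ Set.Icc (0:ℝ) 1, ∀ t ∈ Set.Icc (0:ℝ) 1,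
      |y' s - y' t| ≤ Hy * |s - t| ^ α)
    (S : ℕ → ℕ → ℝ)
    (hS : ∀ k l, S k l = C ^ (k + l) *
      ∫ s in (0:ℝ)..1, s ^ k * (1 - s) ^ l / (k.factorial * l.factorial) * y' s)
    (ε₀ : ℝ) (hε₀ : ε₀ ∈ Set.Ioo (0:ℝ) (1/2))
    (x : ℝ) (hx : x ∈ Set.Icc (0:ℝ) 1)
    (p q : ℕ → ℕ) (hq : ∀ n, 0 < q n)
    (hpq : ∀ n, (p n : ℝ) / (q n : ℝ) ∈ Set.Icc (0:ℝ) 1)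
    (happrox : ∀ n, |(p n : ℝ) / (q n : ℝ) - x| < (q n : ℝ) ^ (-(1/2) : ℝ))
    (hqt : Filter.Tendsto q Filter.atTop Filter.atTop) :
    ∃ C₁ > (0:ℝ), ∃ N : ℕ, ∀ n ≥ N,
      |y' x - ((q n + 1).factorial : ℝ) * S (p n) (q n - p n) / C ^ (q n)|
        ≤ C₁ * (q n : ℝ) ^ ((-(1/2) + ε₀) * α) :=
  stmt_15_general α hα C hC y' hy' Hy hHy hyHolder S hS ε₀ hε₀ x hx p q hq hpq happrox
end
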